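/- arXiv:0904.0916 — 2 statements merged into one kernel-verified Lean document; each statement's English description precedes it below -/
import Mathlib

section
/- In a left adequate semigroup S, for every idempotent e and every a ∈ S, e a^+ = (ea)^+. -/
/-- `a 𝓡* b` in a semigroup `S`: for all `x, y ∈ S¹`, `xa = ya ↔ xb = yb`. -/
def RStar {S : Type*} [Semigroup S] (a b : S) : Prop :=
  ∀ x y : WithOne S, x * (a : WithOne S) = y * (a : WithOne S) ↔
    x * (b : WithOne S) = y * (b : WithOne S)

/-- `S` with unary operation `p` is a left adequate semigroup: idempotents commute,
each `p a` is an idempotent, and `p a` is the (unique) idempotent `𝓡*`-related to `a`. -/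
def IsLeftAdequatePlus {S : Type*} [Semigroup S] (p : S → S) : Prop :=
  (∀ e f : S, e * e = e → f * f = f → e * f = f * e) ∧
  (∀ a : S, p a * p a = p a) ∧
  (∀ a : S, RStar a (p a))

/-!
The idempotent `e a⁺` is `𝓡*`-related to `e a`, because `𝓡*` is a left congruence, and hence
to `(ea)⁺`. Two commuting idempotents `e, f` that are `𝓡*`-related coincide: `e · e = 1 · e`
transfers to `e f = f`, symmetrically `f e = e`, so `e = f e = e f = f`.
-/

namespace RStar

variable {S : Type*} [Semigroup S] {a b c : S}

theorem symm (h : RStar a b) : RStar b a := fun x y => (h x y).symm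

theorem trans (hab : RStar a b) (hbc : RStar b c) : RStar a c := fun x y =>
  (hab x y).trans (hbc x y)

theorem mul_left (h : RStar a b) (c : S) : RStar (c * a) (c * b) := by
  intro x y
  simpa only [WithOne.coe_mul, mul_assoc] using h (x * c) (y * c)

theorem mul_eq_right_of_isIdempotentElem (h : RStar a b) (ha : IsIdempotentElem a) :
    a * b = b := by
  have := (h a 1).mp (by rw [one_mul, ← WithOne.coe_mul, ha.eq])
  rwa [one_mul, ← WithOne.coe_mul, WithOne.coe_inj] at this

theorem eq_of_isIdempotentElem (h : RStar a b) (ha : IsIdempotentElem a)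
    (hb : IsIdempotentElem b) (hab : Commute a b) : a = b :=
  calc a = b * a := (h.symm.mul_eq_right_of_isIdempotentElem hb).symm
    _ = a * b := hab.eq.symm
    _ = b := h.mul_eq_right_of_isIdempotentElem ha

end RStar

/-- In a left adequate semigroup, for every idempotent `e` and every `a`,
`e a⁺ = (ea)⁺`. -/
theorem idem_mul_plus {S : Type*} [Semigroup S] (p : S → S)
    (h : IsLeftAdequatePlus p) (e a : S) (he : e * e = e) : e * p a = p (e * a) := by
  obtain ⟨hcomm, hidem, hrstar⟩ := h
  have hidem_mul : IsIdempotentElem (e * p a) :=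
    IsIdempotentElem.mul_of_commute (hcomm e (p a) he (hidem a)) he (hidem a)
  have hrel : RStar (e * p a) (p (e * a)) :=
    ((hrstar a).symm.mul_left e).trans (hrstar (e * a))
  exact hrel.eq_of_isIdempotentElem hidem_mul (hidem (e * a))
    (hcomm _ _ hidem_mul (hidem (e * a)))
end

section
/- For a non-empty set Σ, the free left adequate semigroup on Σ is not finitely generated as a plain semigroup (without the unary operation). -/
/-- `(S, p)` together with `ι : σ → S` is a free left adequate semigroup on `σ`:
every map from `σ` to a left adequate semigroup extends uniquely to a
`(2,1)`-morphism (preserving multiplication and the `⁺` operation). -/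
def FreeLeftAdequateSemigroupOn (σ : Type*) (S : Type*) [Semigroup S]
    (p : S → S) (ι : σ → S) : Prop :=
  IsLeftAdequatePlus p ∧
  ∀ (T : Type*) [Semigroup T] (q : T → T), IsLeftAdequatePlus q →
    ∀ χ : σ → T, ∃! f : S → T,
      (∀ a b : S, f (a * b) = f a * f b) ∧ (∀ a : S, f (p a) = q (f a)) ∧
      (∀ s : σ, f (ι s) = χ s)

/-!
Forget everything about a left adequate tree but its height `m` and the length `n` of its
trunk. Pruned multiplication glues the second tree onto the end of the first trunk, so these
pairs multiply as `(m, n) * (k, l) = (max m (n + k), n + l)` (composition of the maps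
`x ↦ max m (n + x)`), and `⁺` retracts the trunk: `(m, n)⁺ = (m, 0)`. This is again left
adequate, so a generator `a ↦ (1, 1)` induces a morphism from the free object whose image
contains `(k, k)` and hence `(k, 0)` for every `k`. But products of finitely many pairs keep
the excess of height over trunk bounded.
-/

universe u

@[ext]
structure TrunkHeight : Type u where
  height : ℕ
  trunk : ℕ

namespace TrunkHeight

instance : Semigroup TrunkHeight where
  mul a b := ⟨max a.height (a.trunk + b.height), a.trunk + b.trunk⟩
  mul_assoc a b c := by
    ext
    · show max (max a.height (a.trunk + b.height)) (a.trunk + b.trunk + c.height) =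
        max a.height (a.trunk + max b.height (b.trunk + c.height))
      omega
    · exact Nat.add_assoc _ _ _

@[simp] theorem mul_height (a b : TrunkHeight) :
    (a * b).height = max a.height (a.trunk + b.height) := rfl

@[simp] theorem mul_trunk (a b : TrunkHeight) : (a * b).trunk = a.trunk + b.trunk := rfl

def retract (a : TrunkHeight) : TrunkHeight := ⟨a.height, 0⟩

theorem mul_self_eq_self_iff {a : TrunkHeight} : a * a = a ↔ a.trunk = 0 := by
  simp only [TrunkHeight.ext_iff, mul_height, mul_trunk]
  omega

theorem rStar_of_height_eq {a b : TrunkHeight} (h : a.height = b.height) : RStar a b := by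
  intro x y
  induction x using WithOne.cases_on <;> induction y using WithOne.cases_on <;>
    simp only [one_mul, ← WithOne.coe_mul, WithOne.coe_inj, TrunkHeight.ext_iff,
      mul_height, mul_trunk] <;> omega

theorem isLeftAdequatePlus_retract : IsLeftAdequatePlus retract := by
  refine ⟨fun e f he hf => ?_, fun a => mul_self_eq_self_iff.mpr rfl,
    fun a => rStar_of_height_eq rfl⟩
  rw [mul_self_eq_self_iff] at he hf
  simp [TrunkHeight.ext_iff, he, hf, max_comm]

def boundedExcess (B : ℕ) : Subsemigroup TrunkHeight where
  carrier := {t | t.height ≤ B + t.trunk}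
  mul_mem' {a b} ha hb := by
    simp only [Set.mem_ofPred_eq, mul_height, mul_trunk] at *
    omega

theorem exists_closure_le_boundedExcess {G : Set TrunkHeight} (hG : G.Finite) :
    ∃ B, Subsemigroup.closure G ≤ boundedExcess B := by
  obtain ⟨B, hB⟩ := (hG.image height).bddAbove
  refine ⟨B, Subsemigroup.closure_le.mpr fun g hg => ?_⟩
  exact (hB ⟨g, hg, rfl⟩).trans (Nat.le_add_right _ _)

theorem not_le_boundedExcess {H : Subsemigroup TrunkHeight} (hone : ⟨1, 1⟩ ∈ H)
    (hretract : ∀ t ∈ H, retract t ∈ H) (B : ℕ) : ¬ H ≤ boundedExcess B := by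
  have hdiag : ∀ n : ℕ, ⟨n + 1, n + 1⟩ ∈ H := by
    intro n
    induction n with
    | zero => exact hone
    | succ n ih =>
      convert H.mul_mem ih hone using 1
      ext <;> simp
  intro hle
  have := hle (hretract _ (hdiag B))
  simp [boundedExcess, retract] at this

end TrunkHeight

/-- For a non-empty set `σ`, the free left adequate semigroup on `σ` is not
finitely generated as a plain semigroup (forgetting the unary operation). -/
theorem free_left_adequate_not_finitely_generated (σ : Type*) [Nonempty σ]
    (S : Type*) [Semigroup S] (p : S → S) (ι : σ → S)
    (hfree : FreeLeftAdequateSemigroupOn σ S p ι) :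
    ¬ ∃ F : Set S, F.Finite ∧ Subsemigroup.closure F = ⊤ := by
  rintro ⟨F, hF, hgen⟩
  obtain ⟨f, ⟨hmul, hp, hι⟩, -⟩ :=
    hfree.2 TrunkHeight TrunkHeight.retract TrunkHeight.isLeftAdequatePlus_retract
      fun _ => ⟨1, 1⟩
  let φ : S →ₙ* TrunkHeight := ⟨f, hmul⟩
  obtain ⟨B, hB⟩ := TrunkHeight.exists_closure_le_boundedExcess (hF.image φ)
  refine TrunkHeight.not_le_boundedExcess (H := φ.srange) ⟨ι (Classical.arbitrary σ), hι _⟩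
    (by rintro _ ⟨s, rfl⟩; exact ⟨p s, hp s⟩) B ?_
  rwa [MulHom.srange_eq_map, ← hgen, MulHom.map_mclosure]
end
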